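/- Let 1 ≤ i_1 < i_2 < ⋯ < i_r ≤ n be integers, α_1,…,α_r positive integers, and u = x_{i_1}^{α_1} x_{i_2}^{α_2} ⋯ x_{i_r}^{α_r} ∈ S. Then the ideal P = ∏_{q=1}^{r} m_q^{[α_q]} is a monomial ideal of strong Borel type containing u, and P is contained in every monomial ideal of strong Borel type that contains u; that is, P is the smallest strong Borel type ideal containing u (P = SBT(u)). -/

import Mathlib

open MvPolynomial

/-- A monomial ideal of `K[x_1,…,x_n]`: an ideal generated by monomials. -/
def IsMonomialIdeal {n : ℕ} {K : Type*} [Field K]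
    (I : Ideal (MvPolynomial (Fin n) K)) : Prop :=
  ∃ A : Set (Fin n →₀ ℕ),
    I = Ideal.span ((fun m => (monomial m (1 : K) : MvPolynomial (Fin n) K)) '' A)

/-- A monomial ideal `I` is of strong Borel type (SBT). -/
def IsSBT {n : ℕ} {K : Type*} [Field K]
    (I : Ideal (MvPolynomial (Fin n) K)) : Prop :=
  IsMonomialIdeal I ∧
    ∀ m : Fin n →₀ ℕ, (monomial m (1 : K) : MvPolynomial (Fin n) K) ∈ I →
      ∀ j i : Fin n, j < i →
        ∃ t : ℕ, t ≤ m i ∧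
          (monomial (Finsupp.update m i 0 + Finsupp.single j t) (1 : K) :
            MvPolynomial (Fin n) K) ∈ I

/-!
Expanding the product, `P` is spanned by the monomials `x_{l_1}^{α_1} ⋯ x_{l_r}^{α_r}` with
`l_q ≤ i_q`. The exponent set of these generators is closed under the moves `x_k ↦ x_j` (`j < k`),
since each factor only asks for its variable to lie in an initial segment; so `P` is of strong
Borel type, and clearly `u ∈ P`. Conversely, in an SBT ideal containing `u`, one replaces
`x_{i_q}^{α_q}` by `x_{l_q}^{α_q}` for `q = 1, …, r` in turn: as the `i_q` increase, `x_{i_q}`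
occurs in no other factor at that stage, so the SBT move transfers exactly the exponent `α_q`.
-/

open scoped Pointwise

namespace Finsupp

theorem update_add_single_self {α M : Type*} [AddCommMonoid M] {W : α →₀ M} {k : α}
    (hW : W k = 0) (e : M) : (W + single k e).update k 0 = W := by
  classical
  ext x
  rcases eq_or_ne x k with rfl | hx
  · simp [hW]
  · simp [update_apply, hx]

theorem mapDomain_update_id {α M : Type*} [DecidableEq α] [AddCommMonoid M]
    (b : α →₀ M) (k j : α) :
    b.mapDomain (Function.update id k j) = b.update k 0 + single j (b k) := by
  induction b using Finsupp.induction_linear with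
  | zero => simp
  | add f g hf hg =>
    rw [mapDomain_add, hf, hg]
    ext x
    simp only [coe_add, Pi.add_apply, coe_update, Function.update_apply, single_apply]
    split_ifs <;> simp [add_add_add_comm]
  | single x e =>
    ext y
    simp only [mapDomain_single, coe_add, Pi.add_apply, coe_update, Function.update_apply,
      single_apply, id]
    split_ifs <;> simp_all

theorem mapDomain_update_id_mem_finsetSum {σ ι : Type*} [Preorder σ] [DecidableEq σ]
    {s : Finset ι} {e : ι → ℕ} {L : ι → Set σ} (hL : ∀ q ∈ s, IsLowerSet (L q))
    {b : σ →₀ ℕ} (hb : b ∈ ∑ q ∈ s, (single · (e q)) '' L q) {j k : σ} (hjk : j ≤ k) :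
    b.mapDomain (Function.update id k j) ∈ ∑ q ∈ s, (single · (e q)) '' L q := by
  obtain ⟨g, hg, rfl⟩ := (Set.mem_finsetSum _ _ _).mp hb
  rw [mapDomain_finsetSum]
  refine Set.finsetSum_mem_finsetSum _ _ _ fun q hq => ?_
  obtain ⟨l, hl, hgl⟩ := hg hq
  refine ⟨Function.update id k j l, ?_, by rw [← hgl, mapDomain_single]⟩
  rcases eq_or_ne l k with rfl | hlk
  · simpa using hL q hq hjk hl
  · simpa [Function.update_of_ne hlk] using hl

end Finsupp

open Finsupp

namespace MvPolynomial

variable {σ R : Type*} [CommSemiring R]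

theorem monomial_one_mem_of_le {I : Ideal (MvPolynomial σ R)} {a b : σ →₀ ℕ}
    (ha : monomial a 1 ∈ I) (hab : a ≤ b) : monomial b 1 ∈ I :=
  I.mem_of_dvd (monomial_dvd_monomial.mpr ⟨Or.inr hab, one_dvd _⟩) ha

theorem monomial_one_mem_span_image_iff [Nontrivial R] {B : Set (σ →₀ ℕ)} {m : σ →₀ ℕ} :
    monomial m (1 : R) ∈ Ideal.span ((monomial · 1) '' B) ↔ ∃ b ∈ B, b ≤ m := by
  classical
  simp [mem_ideal_span_monomial_image, support_monomial]

theorem image_monomial_one_finsetSum {ι : Type*} (s : Finset ι) (S : ι → Set (σ →₀ ℕ)) :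
    (monomial · (1 : R)) '' ∑ q ∈ s, S q = ∏ q ∈ s, (monomial · 1) '' S q := by
  ext x
  simp only [Set.mem_image, Set.mem_finsetSum, Set.mem_finsetProd]
  constructor
  · rintro ⟨_, ⟨g, hg, rfl⟩, rfl⟩
    exact ⟨fun q => monomial (g q) 1, fun hq => ⟨g _, hg hq, rfl⟩,
      (monomial_sum_one s g).symm⟩
  · rintro ⟨h, hh, rfl⟩
    choose! g hg hgh using fun q (hq : q ∈ s) => hh hq
    refine ⟨∑ q ∈ s, g q, ⟨g, fun hq => hg _ hq, rfl⟩, ?_⟩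
    rw [monomial_sum_one]
    exact Finset.prod_congr rfl hgh

theorem prod_span_image_X_pow {ι : Type*} (s : Finset ι) (e : ι → ℕ) (L : ι → Set σ) :
    ∏ q ∈ s, Ideal.span ((X · ^ e q) '' L q : Set (MvPolynomial σ R)) =
      Ideal.span ((monomial · 1) '' ∑ q ∈ s, (single · (e q)) '' L q) := by
  have hX : ∀ q, ((X · ^ e q) '' L q : Set (MvPolynomial σ R)) =
      (monomial · 1) '' ((single · (e q)) '' L q) := fun q => by
    simp_rw [Set.image_image, X_pow_eq_monomial]
  simp_rw [hX, Ideal.prod_span, image_monomial_one_finsetSum]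

end MvPolynomial

section StrongBorel

variable {n : ℕ} {K : Type*} [Field K]

theorem isSBT_span_monomial_of_mapDomain_mem {B : Set (Fin n →₀ ℕ)}
    (hB : ∀ b ∈ B, ∀ j k : Fin n, j < k → b.mapDomain (Function.update id k j) ∈ B) :
    IsSBT (Ideal.span ((monomial · (1 : K)) '' B)) := by
  classical
  refine ⟨⟨B, rfl⟩, fun m hm j k hjk => ?_⟩
  obtain ⟨b, hb, hbm⟩ := monomial_one_mem_span_image_iff.mp hm
  refine ⟨b k, hbm k, monomial_one_mem_span_image_iff.mpr ⟨_, hB b hb j k hjk, ?_⟩⟩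
  rw [Finsupp.mapDomain_update_id]
  have hupdate : b.update k 0 ≤ m.update k 0 := Finsupp.le_def.mpr fun x => by
    simp only [Finsupp.coe_update, Function.update_apply]
    split_ifs
    exacts [le_rfl, hbm x]
  exact add_le_add hupdate le_rfl

theorem isSBT_span_monomial_finsetSum_image_single {ι : Type*} {s : Finset ι} (e : ι → ℕ)
    {L : ι → Set (Fin n)} (hL : ∀ q ∈ s, IsLowerSet (L q)) :
    IsSBT (Ideal.span ((monomial · (1 : K)) '' ∑ q ∈ s, (single · (e q)) '' L q)) :=
  isSBT_span_monomial_of_mapDomain_mem fun _ hb _ _ hjk =>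
    mapDomain_update_id_mem_finsetSum hL hb hjk.le

theorem IsSBT.monomial_add_single_mem {J : Ideal (MvPolynomial (Fin n) K)} (hJ : IsSBT J)
    {W : Fin n →₀ ℕ} {j k : Fin n} {e : ℕ} (hm : monomial (W + single k e) (1 : K) ∈ J)
    (hW : W k = 0) (hjk : j ≤ k) : monomial (W + single j e) (1 : K) ∈ J := by
  obtain hjk | rfl := hjk.lt_or_eq
  · obtain ⟨t, ht, hmem⟩ := hJ.2 _ hm j k hjk
    rw [update_add_single_self hW] at hmem
    simp only [Finsupp.add_apply, hW, single_eq_same, zero_add] at ht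
    exact monomial_one_mem_of_le hmem (add_le_add_right (single_le_single.mpr ht) _)
  · exact hm

theorem IsSBT.monomial_sum_mem {J : Ideal (MvPolynomial (Fin n) K)} (hJ : IsSBT J)
    {ι : Type*} [LinearOrder ι] {s : Finset ι} {a : ι → Fin n} (ha : StrictMonoOn a s)
    {e : ι → ℕ} (hu : monomial (∑ q ∈ s, single (a q) (e q)) (1 : K) ∈ J)
    {g : ι → Fin n →₀ ℕ} (hg : ∀ q ∈ s, g q ∈ (single · (e q)) '' Set.Iic (a q)) :
    monomial (∑ q ∈ s, g q) (1 : K) ∈ J := by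
  classical
  -- Replace `single (a q) (e q)` by `g q` one factor at a time, in increasing order of `q`,
  -- so that `a q₀` is absent from the remaining exponent `W` when factor `q₀` is moved.
  suffices key : ∀ T ⊆ s,
      monomial (∑ q ∈ s, if q ∈ T then g q else single (a q) (e q)) (1 : K) ∈ J by
    simpa only [Finset.sum_congr rfl fun q hq => if_pos hq] using key s subset_rfl
  intro T
  induction T using Finset.induction_on_max with
  | empty => simpa using hu
  | insert q₀ T hlt ih =>
    intro hT
    have hq₀ : q₀ ∈ s := hT (Finset.mem_insert_self _ _)
    have hq₀T : q₀ ∉ T := fun h => lt_irrefl _ (hlt q₀ h)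
    set W := ∑ q ∈ s.erase q₀, if q ∈ T then g q else single (a q) (e q)
    have hW : W (a q₀) = 0 := by
      rw [Finsupp.finsetSum_apply]
      refine Finset.sum_eq_zero fun q hq => ?_
      obtain ⟨hqq₀, hq⟩ := Finset.mem_erase.mp hq
      split_ifs with hqT
      · obtain ⟨l, hl, hgl⟩ := hg q hq
        rw [← hgl]
        exact single_eq_of_ne (hl.trans_lt (ha hq hq₀ (hlt q hqT))).ne'
      · exact single_eq_of_ne (ha.injOn.ne hq₀ hq (Ne.symm hqq₀))
    have hT' : ∑ q ∈ s, (if q ∈ T then g q else single (a q) (e q)) =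
        W + single (a q₀) (e q₀) := by
      rw [← Finset.add_sum_erase _ _ hq₀, if_neg hq₀T, add_comm]
    have hinsert : ∑ q ∈ s, (if q ∈ insert q₀ T then g q else single (a q) (e q)) =
        W + g q₀ := by
      rw [← Finset.add_sum_erase _ _ hq₀, if_pos (Finset.mem_insert_self _ _), add_comm]
      congr 1
      refine Finset.sum_congr rfl fun q hq => ?_
      simp only [Finset.mem_insert, Finset.ne_of_mem_erase hq, false_or]
    obtain ⟨l₀, hl₀, hg₀⟩ := hg q₀ hq₀
    rw [hinsert, ← hg₀]
    refine hJ.monomial_add_single_mem ?_ hW hl₀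
    rw [← hT']
    exact ih ((Finset.subset_insert _ _).trans hT)

theorem IsSBT.span_le {J : Ideal (MvPolynomial (Fin n) K)} (hJ : IsSBT J)
    {ι : Type*} [LinearOrder ι] {s : Finset ι} {a : ι → Fin n} (ha : StrictMonoOn a s)
    {e : ι → ℕ} (hu : monomial (∑ q ∈ s, single (a q) (e q)) (1 : K) ∈ J)
    {L : ι → Set (Fin n)} (hL : ∀ q ∈ s, L q ⊆ Set.Iic (a q)) :
    Ideal.span ((monomial · (1 : K)) '' ∑ q ∈ s, (single · (e q)) '' L q) ≤ J := by
  rw [Ideal.span_le]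
  rintro _ ⟨b, hb, rfl⟩
  obtain ⟨g, hg, rfl⟩ := (Set.mem_finsetSum _ _ _).mp hb
  exact hJ.monomial_sum_mem ha hu fun q hq => Set.image_mono (hL q hq) (hg hq)

end StrongBorel

theorem exists_strictMonoOn_fin_add_one_eq {n r : ℕ} [NeZero n] {i : ℕ → ℕ} (hi1 : 1 ≤ i 1)
    (hin : i r ≤ n) (himono : StrictMonoOn i (Set.Icc 1 r)) :
    ∃ a : ℕ → Fin n, StrictMonoOn a (Finset.Icc 1 r) ∧
      ∀ q ∈ Finset.Icc 1 r, (a q : ℕ) + 1 = i q := by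
  have hi : ∀ q ∈ Finset.Icc 1 r, ∃ l : Fin n, (l : ℕ) + 1 = i q := fun q hq => by
    obtain ⟨h1q, hqr⟩ := Finset.mem_Icc.mp hq
    have h1 := himono.monotoneOn ⟨le_rfl, h1q.trans hqr⟩ ⟨h1q, hqr⟩ h1q
    have h2 := himono.monotoneOn ⟨h1q, hqr⟩ ⟨h1q.trans hqr, le_rfl⟩ hqr
    exact ⟨⟨i q - 1, by omega⟩, by simp only; omega⟩
  choose! a ha using hi
  refine ⟨a, fun p hp q hq hpq => ?_, ha⟩
  have := himono (by simpa using hp) (by simpa using hq) hpq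
  have := ha p hp
  have := ha q hq
  rw [Fin.lt_def]
  omega

/-- Indices are 1-based as in the paper: the variable `x_j` is `X l` with `l + 1 = j`. -/
theorem principal_sbt_ideal_general {n : ℕ} (hn : 2 ≤ n) {K : Type*} [Field K]
    (r : ℕ) (i α : ℕ → ℕ)
    (hi1 : 1 ≤ i 1) (hin : i r ≤ n) (himono : StrictMonoOn i (Set.Icc 1 r)) :
    letI u : MvPolynomial (Fin n) K :=
      ∏ q ∈ Finset.Icc 1 r, ∏ l : Fin n, if (l : ℕ) + 1 = i q then X l ^ α q else 1
    letI P : Ideal (MvPolynomial (Fin n) K) :=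
      ∏ q ∈ Finset.Icc 1 r,
        Ideal.span {g : MvPolynomial (Fin n) K |
          ∃ l : Fin n, (l : ℕ) < i q ∧ g = X l ^ α q}
    IsSBT P ∧ u ∈ P ∧
      ∀ J : Ideal (MvPolynomial (Fin n) K), IsSBT J → u ∈ J → P ≤ J := by
  have : NeZero n := ⟨by omega⟩
  have hP : ∏ q ∈ Finset.Icc 1 r, Ideal.span {g : MvPolynomial (Fin n) K |
      ∃ l : Fin n, (l : ℕ) < i q ∧ g = X l ^ α q} = Ideal.span ((monomial · 1) ''
      ∑ q ∈ Finset.Icc 1 r, (single · (α q)) '' {l : Fin n | (l : ℕ) < i q}) := by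
    rw [← prod_span_image_X_pow]
    simp only [Set.image, Set.mem_ofPred_eq, eq_comm]
  obtain ⟨a, ha_mono, ha⟩ := exists_strictMonoOn_fin_add_one_eq hi1 hin himono
  have hu : ∏ q ∈ Finset.Icc 1 r, ∏ l : Fin n,
      (if (l : ℕ) + 1 = i q then X l ^ α q else 1 : MvPolynomial (Fin n) K) =
      monomial (∑ q ∈ Finset.Icc 1 r, single (a q) (α q)) 1 := by
    rw [monomial_sum_one]
    refine Finset.prod_congr rfl fun q hq => ?_
    simp_rw [← ha q hq, add_left_inj, Fin.val_inj, Fintype.prod_ite_eq', X_pow_eq_monomial]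
  refine ⟨?_, ?_, fun J hJ huJ => ?_⟩
  · rw [hP]
    exact isSBT_span_monomial_finsetSum_image_single α
      fun q _ _ _ hxy hy => (Fin.le_def.mp hxy).trans_lt hy
  · rw [hu, hP]
    exact Ideal.subset_span ⟨_, Set.finsetSum_mem_finsetSum _ _ _ fun q hq =>
      ⟨a q, by simp [← ha q hq], rfl⟩, rfl⟩
  · rw [hP]
    refine (hJ.span_le ha_mono (hu ▸ huJ)) fun q hq l hl => ?_
    have := ha q hq
    simp only [Set.mem_ofPred_eq, Set.mem_Iic, Fin.le_def] at hl ⊢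
    omega

/-- Lemma 1.4: for `u = x_{i_1}^{α_1} ⋯ x_{i_r}^{α_r}` (indices `1 ≤ i_1 < ⋯ < i_r ≤ n`,
1-based; the variable `x_j` is `X l` with `l + 1 = j`), the ideal
`P = ∏_{q=1}^r (x_1^{α_q},…,x_{i_q}^{α_q})` is a strong Borel type ideal containing `u`,
and it is contained in every strong Borel type ideal containing `u`; i.e. `P = SBT(u)`. -/
theorem principal_sbt_ideal {n : ℕ} (hn : 2 ≤ n) {K : Type*} [Field K]
    (r : ℕ) (hr : 1 ≤ r) (i α : ℕ → ℕ)
    (hi1 : 1 ≤ i 1) (hin : i r ≤ n) (himono : StrictMonoOn i (Set.Icc 1 r))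
    (hα : ∀ q ∈ Finset.Icc 1 r, 1 ≤ α q) :
    letI u : MvPolynomial (Fin n) K :=
      ∏ q ∈ Finset.Icc 1 r, ∏ l : Fin n, if (l : ℕ) + 1 = i q then X l ^ α q else 1
    letI P : Ideal (MvPolynomial (Fin n) K) :=
      ∏ q ∈ Finset.Icc 1 r,
        Ideal.span {g : MvPolynomial (Fin n) K |
          ∃ l : Fin n, (l : ℕ) < i q ∧ g = X l ^ α q}
    IsSBT P ∧ u ∈ P ∧
      ∀ J : Ideal (MvPolynomial (Fin n) K), IsSBT J → u ∈ J → P ≤ J :=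
  principal_sbt_ideal_general hn r i α hi1 hin himono
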